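/- arXiv:0706.0921 — 3 statements merged into one kernel-verified Lean document; each statement's English description precedes it below -/
import Mathlib

section
/- Lemma (fundamental solution of the twist problem). Let 𝔪(ζ) = diag(ζ^{−1/4}, ζ^{1/4}) · (1/√2)[[1,1],[−1,1]] · diag(e^{−iπ/4}, e^{iπ/4}), with ζ^{±1/4} the principal branches. Then 𝔪 is analytic on ℂ∖(−∞,0], det 𝔪(ζ) = 1 for all such ζ, and for every x < 0 the one-sided limits exist and satisfy lim_{ε→0⁺} 𝔪(x+iε) = (lim_{ε→0⁺} 𝔪(x−iε)) · [[0,1],[−1,0]]. -/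
/-!
Write 𝔪(z) = D(z^{-1/4}, z^{1/4}) with D(a, b) = diag(a, b)·S·E, where the constant factors S and E
have determinant 1; then det 𝔪 = z^{-1/4} z^{1/4} = 1. For ±Im w > 0 one has w^c = (-w)^c e^{±iπc},
and (-w)^c is continuous at -x > 0, so at x < 0 the boundary values are D(r e^{∓iπ/4}, s e^{±iπ/4})
with r = (-x)^{-1/4}, s = (-x)^{1/4}. Because e^{-iπ/2} = -e^{iπ/2}, exchanging the two phases is
exactly right multiplication by [[0,1],[-1,0]].
-/

noncomputable section

open Complex MeasureTheory Filter Topology Set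

/-- 2×2 complex matrices. -/
abbrev Mat2 := Matrix (Fin 2) (Fin 2) ℂ

/-- The "twist" matrix 𝔪(z) = diag(z^{-1/4}, z^{1/4}) · (1/√2)[[1,1],[-1,1]] · diag(e^{-iπ/4}, e^{iπ/4}),
with principal branches of the quarter powers (cut along (-∞,0]). -/
def twistMat (z : ℂ) : Mat2 :=
  !![z ^ (-(1:ℂ)/4), 0; 0, z ^ ((1:ℂ)/4)] *
    ((Real.sqrt 2 : ℂ)⁻¹ • !![(1:ℂ), 1; -1, 1]) *
    !![Complex.exp (-((Real.pi : ℂ) * Complex.I) / 4), 0; 0, Complex.exp ((Real.pi : ℂ) * Complex.I / 4)]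

/-- The open ray arg z = 2π/3. -/
def rayPlus : Set ℂ := {z : ℂ | z ≠ 0 ∧ z.arg = 2 * Real.pi / 3}

/-- The open ray arg z = -2π/3. -/
def rayMinus : Set ℂ := {z : ℂ | z ≠ 0 ∧ z.arg = -(2 * Real.pi / 3)}

/-- The open negative real axis (-∞, 0). -/
def negAxis : Set ℂ := {z : ℂ | z.im = 0 ∧ z.re < 0}

/-- Open sector lo < arg z < hi. -/
def sector (lo hi : ℝ) : Set ℂ := {z : ℂ | lo < z.arg ∧ z.arg < hi}

/-- Lower-triangular jump matrix [[1, 0], [exp((4/3)z^{3/2} + 2 a z^{1/2}), 1]] (principal branches). -/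
def Jlow (a : ℝ) (z : ℂ) : Mat2 :=
  !![1, 0; Complex.exp ((4/3) * z ^ ((3:ℂ)/2) + 2 * (a:ℂ) * z ^ ((1:ℂ)/2)), 1]

/-- Upper-triangular jump matrix [[1, exp(-(4/3)z^{3/2})], [0, 1]]. -/
def Jup (z : ℂ) : Mat2 := !![1, Complex.exp (-(4/3) * z ^ ((3:ℂ)/2)); 0, 1]

/-- The twist jump matrix [[0, 1], [-1, 0]]. -/
def Jtwist : Mat2 := !![0, 1; -1, 0]

/-- `L` is the boundary value of `M` at `x` taken from within the set `S` (entrywise limit). -/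
def BV (M : ℂ → Mat2) (S : Set ℂ) (x : ℂ) (L : Mat2) : Prop :=
  ∀ i j, Filter.Tendsto (fun w => M w i j) (nhdsWithin x S) (nhds (L i j))

/-- `M` stays bounded near the point `p` (off the contour `Sg`). -/
def BoundedNear (Sg : Set ℂ) (M : ℂ → Mat2) (p : ℂ) : Prop :=
  ∃ C ε : ℝ, 0 < ε ∧ ∀ z ∉ Sg, ‖z - p‖ < ε → ∀ i j, ‖M z i j‖ ≤ C

/-- Near `p` (off the contour `Sg`): the first column of `M` stays bounded while the second
column is O(log|z - p|). -/
def LogColNear (Sg : Set ℂ) (M : ℂ → Mat2) (p : ℂ) : Prop :=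
  ∃ C ε : ℝ, 0 < ε ∧ ∀ z ∉ Sg, ‖z - p‖ < ε →
    (∀ i, ‖M z i 0‖ ≤ C) ∧
    (∀ i, ‖M z i 1‖ ≤ C * (1 + |Real.log ‖z - p‖|))

/-- M(z) = 𝔪(z) · (I + O(1/z)) as z → ∞ off the contour `Sg`. -/
def AsympTwist (Sg : Set ℂ) (M : ℂ → Mat2) : Prop :=
  ∃ C R : ℝ, ∀ z ∉ Sg, R < ‖z‖ →
    ∀ i j, ‖((twistMat z)⁻¹ * M z - 1) i j‖ ≤ C / ‖z‖

/-- The constant (2π)^{-1/2} e^{iπ/4}. -/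
def cJan : ℂ := (Real.sqrt (2 * Real.pi) : ℂ)⁻¹ * Complex.exp ((Real.pi : ℂ) * Complex.I / 4)

/-- The closed negative real half-line (-∞, 0], viewed inside ℂ. -/
def cutSet : Set ℂ := {z : ℂ | z.im = 0 ∧ z.re ≤ 0}

open Real

namespace Complex

lemma exp_neg_pi_mul_I_div_four_mul_exp : exp (-(π * I) / 4) * exp (π * I / 4) = 1 := by
  rw [← exp_add]; ring_nf; exact exp_zero

lemma exp_neg_pi_mul_I_div_four_sq : exp (-(π * I) / 4) ^ 2 = -exp (π * I / 4) ^ 2 := by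
  have h : exp (-(π * I) / 4) ^ 2 = exp (π * I / 4) ^ 2 * exp (-(π * I)) := by
    rw [← exp_nat_mul, ← exp_nat_mul, ← exp_add]; ring_nf
  rw [h, exp_neg, exp_pi_mul_I]; ring

lemma cpow_eq_neg_cpow_mul_exp_of_im_pos {w : ℂ} (hw : 0 < w.im) (c : ℂ) :
    w ^ c = (-w) ^ c * exp (π * I * c) := by
  have hw0 : w ≠ 0 := fun h => by simp [h] at hw
  rw [cpow_def_of_ne_zero hw0, cpow_def_of_ne_zero (neg_ne_zero.2 hw0), ← exp_add, log, log,
    norm_neg, arg_neg_eq_arg_sub_pi_of_im_pos hw]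
  push_cast; ring_nf

lemma cpow_eq_neg_cpow_mul_exp_of_im_neg {w : ℂ} (hw : w.im < 0) (c : ℂ) :
    w ^ c = (-w) ^ c * exp (-(π * I * c)) := by
  have hw0 : w ≠ 0 := fun h => by simp [h] at hw
  rw [cpow_def_of_ne_zero hw0, cpow_def_of_ne_zero (neg_ne_zero.2 hw0), ← exp_add, log, log,
    norm_neg, arg_neg_eq_arg_add_pi_of_im_neg hw]
  push_cast; ring_nf

lemma tendsto_cpow_add_mul_I_nhdsGT {x : ℝ} (hx : x < 0) (c : ℂ) :
    Tendsto (fun ε : ℝ => ((x : ℂ) + ε * I) ^ c) (𝓝[>] 0)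
      (𝓝 ((-x : ℂ) ^ c * exp (π * I * c))) := by
  have hpath : Tendsto (fun ε : ℝ => -((x : ℂ) + ε * I)) (𝓝[>] 0) (𝓝 (-x)) := by
    have : Continuous fun ε : ℝ => -((x : ℂ) + ε * I) := by fun_prop
    simpa using (this.tendsto 0).mono_left nhdsWithin_le_nhds
  have hslit : (-x : ℂ) ∈ slitPlane := by
    rw [← ofReal_neg, ofReal_mem_slitPlane]; linarith
  refine ((hpath.cpow tendsto_const_nhds hslit).mul_const _).congr' ?_
  filter_upwards [self_mem_nhdsWithin] with ε (hε : 0 < ε)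
  exact (cpow_eq_neg_cpow_mul_exp_of_im_pos (by simpa using hε) c).symm

lemma tendsto_cpow_sub_mul_I_nhdsGT {x : ℝ} (hx : x < 0) (c : ℂ) :
    Tendsto (fun ε : ℝ => ((x : ℂ) - ε * I) ^ c) (𝓝[>] 0)
      (𝓝 ((-x : ℂ) ^ c * exp (-(π * I * c)))) := by
  have hpath : Tendsto (fun ε : ℝ => -((x : ℂ) - ε * I)) (𝓝[>] 0) (𝓝 (-x)) := by
    have : Continuous fun ε : ℝ => -((x : ℂ) - ε * I) := by fun_prop
    simpa using (this.tendsto 0).mono_left nhdsWithin_le_nhds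
  have hslit : (-x : ℂ) ∈ slitPlane := by
    rw [← ofReal_neg, ofReal_mem_slitPlane]; linarith
  refine ((hpath.cpow tendsto_const_nhds hslit).mul_const _).congr' ?_
  filter_upwards [self_mem_nhdsWithin] with ε (hε : 0 < ε)
  exact (cpow_eq_neg_cpow_mul_exp_of_im_neg (by simpa using hε) c).symm

end Complex

lemma mem_slitPlane_of_notMem_cutSet {z : ℂ} (hz : z ∉ cutSet) : z ∈ slitPlane := by
  rw [mem_slitPlane_iff]
  by_contra! h
  exact hz ⟨h.2, h.1⟩

def twistMatOf (a b : ℂ) : Mat2 :=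
  !![a, 0; 0, b] * ((Real.sqrt 2 : ℂ)⁻¹ • !![(1:ℂ), 1; -1, 1]) *
    !![exp (-((π : ℂ) * I) / 4), 0; 0, exp ((π : ℂ) * I / 4)]

lemma twistMat_eq_twistMatOf (z : ℂ) :
    twistMat z = twistMatOf (z ^ (-(1:ℂ)/4)) (z ^ ((1:ℂ)/4)) := rfl

lemma differentiable_twistMatOf_apply (i j : Fin 2) :
    Differentiable ℂ (fun p : ℂ × ℂ => twistMatOf p.1 p.2 i j) := by
  fin_cases i <;> fin_cases j <;>
    simp [twistMatOf, Matrix.mul_apply, Fin.sum_univ_two] <;> fun_prop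

lemma det_twistMatOf (a b : ℂ) : (twistMatOf a b).det = a * b := by
  have hsqrt : (Real.sqrt 2 : ℂ) ^ 2 = 2 := by
    rw [← Complex.ofReal_pow, Real.sq_sqrt zero_le_two]; norm_num
  simp only [twistMatOf, Matrix.det_mul, Matrix.det_smul, Matrix.det_fin_two_of, Fintype.card_fin]
  rw [inv_pow, hsqrt]
  linear_combination a * b * exp_neg_pi_mul_I_div_four_mul_exp

lemma twistMatOf_eq_mul_Jtwist (u v : ℂ) :
    twistMatOf (u * exp (-((π : ℂ) * I) / 4)) (v * exp ((π : ℂ) * I / 4)) =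
      twistMatOf (u * exp ((π : ℂ) * I / 4)) (v * exp (-((π : ℂ) * I) / 4)) * Jtwist := by
  ext i j
  fin_cases i <;> fin_cases j <;>
    simp [twistMatOf, Jtwist, Matrix.mul_apply, Fin.sum_univ_two]
  · linear_combination u * (√2 : ℂ)⁻¹ * exp_neg_pi_mul_I_div_four_sq
  · ring
  · ring
  · linear_combination v * (√2 : ℂ)⁻¹ * exp_neg_pi_mul_I_div_four_sq

lemma differentiableAt_twistMat_apply {z : ℂ} (hz : z ∈ slitPlane) (i j : Fin 2) :
    DifferentiableAt ℂ (fun w => twistMat w i j) z := by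
  have h₁ : DifferentiableAt ℂ (fun w : ℂ => w ^ (-(1:ℂ)/4)) z := differentiableAt_id.cpow_const hz
  have h₂ : DifferentiableAt ℂ (fun w : ℂ => w ^ ((1:ℂ)/4)) z := differentiableAt_id.cpow_const hz
  exact ((differentiable_twistMatOf_apply i j _).comp z (h₁.prodMk h₂) :)

lemma det_twistMat {z : ℂ} (hz : z ≠ 0) : (twistMat z).det = 1 := by
  rw [twistMat_eq_twistMatOf, det_twistMatOf, ← cpow_add _ _ hz,
    show -(1:ℂ)/4 + 1/4 = 0 by ring, cpow_zero]

lemma tendsto_twistMat_add_mul_I {x : ℝ} (hx : x < 0) (i j : Fin 2) :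
    Tendsto (fun ε : ℝ => twistMat ((x : ℂ) + ε * I) i j) (𝓝[>] 0)
      (𝓝 (twistMatOf ((-x : ℂ) ^ (-(1:ℂ)/4) * exp (-((π : ℂ) * I) / 4))
        ((-x : ℂ) ^ ((1:ℂ)/4) * exp ((π : ℂ) * I / 4)) i j)) := by
  have h₁ := tendsto_cpow_add_mul_I_nhdsGT hx (-(1:ℂ)/4)
  have h₂ := tendsto_cpow_add_mul_I_nhdsGT hx ((1:ℂ)/4)
  rw [show (π : ℂ) * I * (-1 / 4) = -(π * I) / 4 by ring] at h₁
  rw [show (π : ℂ) * I * (1 / 4) = π * I / 4 by ring] at h₂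
  exact (((differentiable_twistMatOf_apply i j).continuous.tendsto _).comp (h₁.prodMk_nhds h₂) :)

lemma tendsto_twistMat_sub_mul_I {x : ℝ} (hx : x < 0) (i j : Fin 2) :
    Tendsto (fun ε : ℝ => twistMat ((x : ℂ) - ε * I) i j) (𝓝[>] 0)
      (𝓝 (twistMatOf ((-x : ℂ) ^ (-(1:ℂ)/4) * exp ((π : ℂ) * I / 4))
        ((-x : ℂ) ^ ((1:ℂ)/4) * exp (-((π : ℂ) * I) / 4)) i j)) := by
  have h₁ := tendsto_cpow_sub_mul_I_nhdsGT hx (-(1:ℂ)/4)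
  have h₂ := tendsto_cpow_sub_mul_I_nhdsGT hx ((1:ℂ)/4)
  rw [show -((π : ℂ) * I * (-1 / 4)) = π * I / 4 by ring] at h₁
  rw [show -((π : ℂ) * I * (1 / 4)) = -(π * I) / 4 by ring] at h₂
  exact (((differentiable_twistMatOf_apply i j).continuous.tendsto _).comp (h₁.prodMk_nhds h₂) :)


/-- Fundamental solution of the twist problem: 𝔪 is analytic off (-∞,0], has determinant 1,
and its boundary values from above and below the cut satisfy 𝔪₊(x) = 𝔪₋(x)·[[0,1],[-1,0]]. -/
theorem twist_fundamental_solution :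
    (∀ z ∉ cutSet, ∀ i j, DifferentiableAt ℂ (fun w => twistMat w i j) z) ∧
    (∀ z ∉ cutSet, (twistMat z).det = 1) ∧
    (∀ x : ℝ, x < 0 → ∃ Mp Mm : Mat2,
      (∀ i j, Filter.Tendsto (fun ε : ℝ => twistMat ((x:ℂ) + (ε:ℂ) * Complex.I) i j)
        (𝓝[>] (0:ℝ)) (𝓝 (Mp i j))) ∧
      (∀ i j, Filter.Tendsto (fun ε : ℝ => twistMat ((x:ℂ) - (ε:ℂ) * Complex.I) i j)
        (𝓝[>] (0:ℝ)) (𝓝 (Mm i j))) ∧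
      Mp = Mm * Jtwist) :=
  ⟨fun _ hz => differentiableAt_twistMat_apply (mem_slitPlane_of_notMem_cutSet hz),
    fun _ hz => det_twistMat (slitPlane_ne_zero (mem_slitPlane_of_notMem_cutSet hz)),
    fun _ hx => ⟨_, _, tendsto_twistMat_add_mul_I hx, tendsto_twistMat_sub_mul_I hx,
      twistMatOf_eq_mul_Jtwist _ _⟩⟩
end
end

section
/- Lemma (GUE constrained left endpoint). For every a > 0 there is exactly one real number b < a such that ∫_b^a s · √((a−s)/(s−b)) ds = −π/2, namely b = (a − 2√(a²+3))/3. In particular, for a = 1 one gets b = −1. -/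
/-!
The substitution `s = b + (a - b) sin² θ`, `θ ∈ (0, π/2)`, turns the integrand into
`2 (a - b) cos² θ (b + (a - b) sin² θ)`, so that `∫_b^a s √((a-s)/(s-b)) ds = π (a-b)(a+3b)/8`.
The condition on `b` is therefore the quadratic equation `(a - b)(a + 3b) = -4`, whose roots are
`(a ± 2√(a² + 3))/3`; only the smaller one lies below `a`.
-/

open Set MeasureTheory
open scoped Real

lemma strictMonoOn_sin_sq : StrictMonoOn (fun θ => Real.sin θ ^ 2) (Icc 0 (π / 2)) :=
  (pow_left_strictMonoOn₀ two_ne_zero).comp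
    (Real.strictMonoOn_sin.mono (Icc_subset_Icc_left (by linarith [Real.pi_pos])))
    fun _ hθ => Real.sin_nonneg_of_nonneg_of_le_pi hθ.1 (hθ.2.trans (by linarith [Real.pi_pos]))

lemma image_sin_sq_Ioo : (fun θ => Real.sin θ ^ 2) '' Ioo 0 (π / 2) = Ioo 0 1 := by
  rw [ContinuousOn.image_Ioo_of_strictMonoOn (by positivity) (by fun_prop) strictMonoOn_sin_sq]
  simp

lemma integral_Ioo_zero_one_eq_integral_sin_sq {E : Type*} [NormedAddCommGroup E]
    [NormedSpace ℝ E] (f : ℝ → E) :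
    ∫ t in Ioo 0 1, f t = ∫ θ in Ioo 0 (π / 2), Real.sin (2 * θ) • f (Real.sin θ ^ 2) := by
  have hderiv : ∀ θ ∈ Ioo 0 (π / 2),
      HasDerivWithinAt (fun θ => Real.sin θ ^ 2) (Real.sin (2 * θ)) (Ioo 0 (π / 2)) θ := fun θ _ =>
    ((Real.hasDerivAt_sin θ).pow 2).hasDerivWithinAt.congr_deriv (by rw [Real.sin_two_mul]; ring)
  rw [← image_sin_sq_Ioo, integral_image_eq_integral_abs_deriv_smul measurableSet_Ioo hderiv
    (strictMonoOn_sin_sq.mono Ioo_subset_Icc_self).injOn]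
  refine setIntegral_congr_fun measurableSet_Ioo fun θ hθ => ?_
  have h2θ : 2 * θ ∈ Ioo 0 π := ⟨by linarith [hθ.1], by linarith [hθ.2]⟩
  simp only [abs_of_pos (Real.sin_pos_of_mem_Ioo h2θ)]

lemma integral_affine_mul_sqrt_one_sub_div (c d : ℝ) :
    ∫ t in (0 : ℝ)..1, (c + d * t) * √((1 - t) / t) = π * (4 * c + d) / 8 := by
  have hcongr : EqOn (fun θ => Real.sin (2 * θ) • ((c + d * Real.sin θ ^ 2) *
        √((1 - Real.sin θ ^ 2) / Real.sin θ ^ 2)))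
      (fun θ => 2 * c * Real.cos θ ^ 2 + 2 * d * (Real.sin θ ^ 2 * Real.cos θ ^ 2))
      (Ioo 0 (π / 2)) := fun θ hθ => by
    have hsin : 0 < Real.sin θ :=
      Real.sin_pos_of_pos_of_lt_pi hθ.1 (hθ.2.trans (by linarith [Real.pi_pos]))
    have hcos : 0 < Real.cos θ := Real.cos_pos_of_mem_Ioo ⟨by linarith [hθ.1, Real.pi_pos], hθ.2⟩
    have hsqrt : √((1 - Real.sin θ ^ 2) / Real.sin θ ^ 2) = Real.cos θ / Real.sin θ := by
      rw [← Real.cos_sq', ← div_pow, Real.sqrt_sq (by positivity)]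
    simp only [smul_eq_mul, hsqrt, Real.sin_two_mul]
    field_simp
  rw [intervalIntegral.integral_of_le zero_le_one, integral_Ioc_eq_integral_Ioo,
    integral_Ioo_zero_one_eq_integral_sin_sq, setIntegral_congr_fun measurableSet_Ioo hcongr,
    ← integral_Ioc_eq_integral_Ioo, ← intervalIntegral.integral_of_le (by positivity),
    intervalIntegral.integral_add (Continuous.intervalIntegrable (by fun_prop) _ _)
      (Continuous.intervalIntegrable (by fun_prop) _ _)]
  simp only [intervalIntegral.integral_const_mul, integral_cos_sq, integral_sin_sq_mul_cos_sq]
  rw [show 4 * (π / 2) = 2 * π by ring]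
  simp
  ring

lemma integral_mul_sqrt_sub_div_sub {a b : ℝ} (hba : b < a) :
    ∫ s in b..a, s * √((a - s) / (s - b)) = π * ((a - b) * (a + 3 * b)) / 8 := by
  have hab : a - b ≠ 0 := (sub_pos.2 hba).ne'
  have hsubst : ∀ t, (b + (a - b) * t) * √((a - (b + (a - b) * t)) / (b + (a - b) * t - b)) =
      (b + (a - b) * t) * √((1 - t) / t) := fun t => by
    rw [show a - (b + (a - b) * t) = (a - b) * (1 - t) by ring, add_sub_cancel_left,
      mul_div_mul_left _ _ hab]
  have h := intervalIntegral.smul_integral_comp_add_mul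
    (fun s => s * √((a - s) / (s - b))) (a - b) b (a := 0) (b := 1)
  simp only [hsubst, integral_affine_mul_sqrt_one_sub_div, smul_eq_mul, mul_zero, add_zero,
    mul_one, add_sub_cancel] at h
  rw [← h]
  ring

lemma left_endpoint_lt (a : ℝ) : (a - 2 * √(a ^ 2 + 3)) / 3 < a := by
  have : -a < √(a ^ 2 + 3) := Real.lt_sqrt_of_sq_lt (by nlinarith)
  linarith

lemma sub_mul_add_three_mul_eq_neg_four_iff {a b : ℝ} (hba : b < a) :
    (a - b) * (a + 3 * b) = -4 ↔ b = (a - 2 * √(a ^ 2 + 3)) / 3 := by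
  have hr : √(a ^ 2 + 3) ^ 2 = a ^ 2 + 3 := Real.sq_sqrt (by positivity)
  have hra : a < √(a ^ 2 + 3) := Real.lt_sqrt_of_sq_lt (by nlinarith)
  constructor
  · intro h
    -- the other root `(a + 2 √(a² + 3)) / 3` exceeds `a`
    have hroots : (3 * b - (a - 2 * √(a ^ 2 + 3))) * (3 * b - (a + 2 * √(a ^ 2 + 3))) = 0 := by
      linear_combination (-3) * h - 4 * hr
    rcases mul_eq_zero.1 hroots with h | h <;> linarith
  · rintro rfl
    linear_combination (-4 / 3) * hr

theorem gue_left_endpoint_general (a : ℝ) :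
    ((a - 2 * Real.sqrt (a^2 + 3)) / 3 < a ∧
      (∫ s in ((a - 2 * Real.sqrt (a^2 + 3)) / 3)..a,
          s * Real.sqrt ((a - s) / (s - (a - 2 * Real.sqrt (a^2 + 3)) / 3)))
        = -(Real.pi / 2)) ∧
    (∀ b : ℝ, b < a →
      (∫ s in b..a, s * Real.sqrt ((a - s) / (s - b))) = -(Real.pi / 2) →
      b = (a - 2 * Real.sqrt (a^2 + 3)) / 3) ∧
    ((1 - 2 * Real.sqrt ((1:ℝ)^2 + 3)) / 3 = -1) := by
  refine ⟨⟨left_endpoint_lt a, ?_⟩, fun b hba h => ?_, ?_⟩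
  · rw [integral_mul_sqrt_sub_div_sub (left_endpoint_lt a),
      (sub_mul_add_three_mul_eq_neg_four_iff (left_endpoint_lt a)).2 rfl]
    ring
  · rw [integral_mul_sqrt_sub_div_sub hba] at h
    exact (sub_mul_add_three_mul_eq_neg_four_iff hba).1 <|
      mul_left_cancel₀ Real.pi_ne_zero (by linarith)
  · rw [show (1 : ℝ) ^ 2 + 3 = 2 ^ 2 by norm_num, Real.sqrt_sq zero_le_two]
    norm_num

/-- GUE constrained left endpoint: for every a > 0 there is exactly one b < a with
∫_b^a s √((a-s)/(s-b)) ds = -π/2, namely b = (a - 2√(a²+3))/3; for a = 1 one gets b = -1. -/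
theorem gue_left_endpoint (a : ℝ) (ha : 0 < a) :
    ((a - 2 * Real.sqrt (a^2 + 3)) / 3 < a ∧
      (∫ s in ((a - 2 * Real.sqrt (a^2 + 3)) / 3)..a,
          s * Real.sqrt ((a - s) / (s - (a - 2 * Real.sqrt (a^2 + 3)) / 3)))
        = -(Real.pi / 2)) ∧
    (∀ b : ℝ, b < a →
      (∫ s in b..a, s * Real.sqrt ((a - s) / (s - b))) = -(Real.pi / 2) →
      b = (a - 2 * Real.sqrt (a^2 + 3)) / 3) ∧
    ((1 - 2 * Real.sqrt ((1:ℝ)^2 + 3)) / 3 = -1) :=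
  gue_left_endpoint_general a
end

section
/- Lemma (GUE constrained equilibrium density is a probability density). Let 0 < a ≤ 1 and let b = (a − 2√(a²+3))/3. Define ψ(x) = (2/π) · √((x−b)/(a−x)) · ((a−b)/2 − x) for x ∈ (b,a). Then ψ(x) > 0 for every x ∈ (b,a), and ∫_b^a ψ(x) dx = 1. In particular, for a = 1, b = −1 this reduces to the semicircle density ψ(x) = (2/π)√(1−x²). -/
/-!
On `(b, a)` the function `√((x - b) / (a - x)) * (m - x)` has the elementary primitive
`√((x - b) * (a - x)) * (x / 2 + (3a - b) / 4 - m) + γ * arcsin ((2x - a - b) / (a - b))` with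
`γ = (a - b) * (4m - 3a - b) / 8`. The first term vanishes at both endpoints, so the integral over
`[b, a]` is `γ * π`. For the GUE density `m = (a - b) / 2`, whence `γ = -(a - b) * (a + 3b) / 8`,
which is `1 / 2` exactly when `b` satisfies the endpoint relation `(a - b) * (a + 3b) = -4`.
Positivity holds because `b ≤ -a` puts `m` to the right of `a`.
-/

open Real Set MeasureTheory

lemma sqrt_div_mul_eq_sqrt_mul (u : ℝ) {v : ℝ} (hv : 0 ≤ v) : √(u / v) * v = √(u * v) := by
  rcases hv.eq_or_lt with rfl | hv
  · simp
  calc √(u / v) * v = √(u / v) * √(v ^ 2) := by rw [sqrt_sq hv.le]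
    _ = √(u / v * v ^ 2) := (sqrt_mul' _ (sq_nonneg v)).symm
    _ = √(u * v) := by congr 1; field_simp

section Primitive

variable {a b x : ℝ}

lemma sqrt_one_sub_sq_affine (hx : x ∈ Ioo b a) :
    √(1 - ((2 * x - a - b) / (a - b)) ^ 2) = 2 * √((x - b) * (a - x)) / (a - b) := by
  have hab : 0 < a - b := by linarith [hx.1, hx.2]
  have h : 1 - ((2 * x - a - b) / (a - b)) ^ 2 = (2 / (a - b)) ^ 2 * ((x - b) * (a - x)) := by
    field_simp; ring
  rw [h, sqrt_mul (sq_nonneg _), sqrt_sq (by positivity)]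
  ring

lemma hasDerivAt_sqrt_mul_sub (hx : x ∈ Ioo b a) :
    HasDerivAt (fun y => √((y - b) * (a - y)))
      ((a + b - 2 * x) / (2 * √((x - b) * (a - x)))) x := by
  have hq : (x - b) * (a - x) ≠ 0 := (mul_pos (sub_pos.2 hx.1) (sub_pos.2 hx.2)).ne'
  have hpoly : HasDerivAt (fun y => (y - b) * (a - y)) (a + b - 2 * x) x := by
    refine (((hasDerivAt_id' x).sub_const b).mul ((hasDerivAt_id' x).const_sub a)).congr_deriv ?_
    ring
  refine ((hasDerivAt_sqrt hq).comp x hpoly).congr_deriv ?_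
  ring

lemma hasDerivAt_arcsin_affine (hx : x ∈ Ioo b a) :
    HasDerivAt (fun y => arcsin ((2 * y - a - b) / (a - b))) (1 / √((x - b) * (a - x))) x := by
  have hab : 0 < a - b := by linarith [hx.1, hx.2]
  have hlo : -1 < (2 * x - a - b) / (a - b) := by rw [lt_div_iff₀ hab]; linarith [hx.1]
  have hhi : (2 * x - a - b) / (a - b) < 1 := by rw [div_lt_one hab]; linarith [hx.2]
  have haff : HasDerivAt (fun y => (2 * y - a - b) / (a - b)) (2 / (a - b)) x := by
    simpa using ((((hasDerivAt_id x).const_mul 2).sub_const a).sub_const b).div_const (a - b)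
  refine ((hasDerivAt_arcsin hlo.ne' hhi.ne).comp x haff).congr_deriv ?_
  rw [sqrt_one_sub_sq_affine hx]
  field_simp

noncomputable def sqrtRatioPrimitive (a b m y : ℝ) : ℝ :=
  √((y - b) * (a - y)) * (y / 2 + (3 * a - b) / 4 - m)
    + (a - b) * (4 * m - 3 * a - b) / 8 * arcsin ((2 * y - a - b) / (a - b))

lemma hasDerivAt_sqrtRatioPrimitive (m : ℝ) (hx : x ∈ Ioo b a) :
    HasDerivAt (sqrtRatioPrimitive a b m) (√((x - b) / (a - x)) * (m - x)) x := by
  have hax : 0 < a - x := sub_pos.2 hx.2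
  set s := √((x - b) * (a - x)) with hs
  have hs_pos : 0 < s := sqrt_pos.2 (mul_pos (sub_pos.2 hx.1) hax)
  have hs_sq : s ^ 2 = (x - b) * (a - x) := sq_sqrt (mul_pos (sub_pos.2 hx.1) hax).le
  have hratio : √((x - b) / (a - x)) = s / (a - x) := by
    rw [hs, ← sqrt_div_mul_eq_sqrt_mul _ hax.le]
    field_simp
  have hlin : HasDerivAt (fun y : ℝ => y / 2 + (3 * a - b) / 4 - m) (1 / 2) x := by
    simpa using (((hasDerivAt_id x).div_const 2).add_const ((3 * a - b) / 4)).sub_const m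
  refine (((hasDerivAt_sqrt_mul_sub hx).mul hlin).add
    ((hasDerivAt_arcsin_affine hx).const_mul ((a - b) * (4 * m - 3 * a - b) / 8))).congr_deriv ?_
  rw [hratio, ← hs]
  field_simp
  linear_combination (64 * (a - x) - 128 * (m - x)) * hs_sq

lemma continuous_sqrtRatioPrimitive (a b m : ℝ) : Continuous (sqrtRatioPrimitive a b m) := by
  unfold sqrtRatioPrimitive
  fun_prop

lemma sqrtRatioPrimitive_right (m : ℝ) (hab : b ≠ a) :
    sqrtRatioPrimitive a b m a = (a - b) * (4 * m - 3 * a - b) / 8 * (π / 2) := by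
  have h : (2 * a - a - b) / (a - b) = 1 := by
    rw [div_eq_one_iff_eq (sub_ne_zero.2 hab.symm)]; ring
  simp [sqrtRatioPrimitive, h]

lemma sqrtRatioPrimitive_left (m : ℝ) (hab : b ≠ a) :
    sqrtRatioPrimitive a b m b = (a - b) * (4 * m - 3 * a - b) / 8 * (-(π / 2)) := by
  have h : (2 * b - a - b) / (a - b) = -1 := by
    rw [div_eq_iff (sub_ne_zero.2 hab.symm)]; ring
  simp [sqrtRatioPrimitive, h]

end Primitive

section Integral

variable {a b : ℝ}

lemma intervalIntegrable_sqrt_div_mul_sub (hba : b ≤ a) (m : ℝ) :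
    IntervalIntegrable (fun x => √((x - b) / (a - x)) * (m - x)) volume b a := by
  have hsing : IntervalIntegrable (fun x => (a - x) ^ (-(1 / 2) : ℝ)) volume b a := by
    have h := (intervalIntegral.intervalIntegrable_rpow' (a := 0) (b := a - b)
      (r := -(1 / 2)) (by norm_num)).comp_sub_left a
    simpa only [sub_zero, sub_sub_cancel] using h.symm
  refine (hsing.continuousOn_mul (g := fun x => √(x - b) * (m - x)) (by fun_prop)).congr ?_
  intro x hx
  rw [uIoc_of_le hba] at hx
  have hax : 0 ≤ a - x := sub_nonneg.2 hx.2
  simp only [sqrt_div' _ hax, rpow_neg hax, sqrt_eq_rpow]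
  ring

theorem integral_sqrt_div_mul_sub (hba : b < a) (m : ℝ) :
    ∫ x in b..a, √((x - b) / (a - x)) * (m - x) = π * (a - b) * (4 * m - 3 * a - b) / 8 := by
  rw [intervalIntegral.integral_eq_sub_of_hasDeriv_right_of_le hba.le
    (continuous_sqrtRatioPrimitive a b m).continuousOn
    (fun x hx => (hasDerivAt_sqrtRatioPrimitive m hx).hasDerivWithinAt)
    (intervalIntegrable_sqrt_div_mul_sub hba.le m),
    sqrtRatioPrimitive_right m hba.ne, sqrtRatioPrimitive_left m hba.ne]
  ring

lemma sqrt_div_mul_sub_pos {m x : ℝ} (hx : x ∈ Ioo b a) (ham : a ≤ m) :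
    0 < √((x - b) / (a - x)) * (m - x) :=
  mul_pos (sqrt_pos.2 (div_pos (sub_pos.2 hx.1) (sub_pos.2 hx.2))) (by linarith [hx.2])

end Integral

/-- The left endpoint `b` of the constrained GUE equilibrium measure on `(-∞, a]`. -/
noncomputable def gueEndpoint (a : ℝ) : ℝ := (a - 2 * √(a ^ 2 + 3)) / 3

lemma abs_lt_sqrt_sq_add_three (a : ℝ) : |a| < √(a ^ 2 + 3) := by
  rw [← sqrt_sq_eq_abs]
  exact sqrt_lt_sqrt (sq_nonneg a) (by linarith)

lemma gueEndpoint_lt (a : ℝ) : gueEndpoint a < a := by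
  have := abs_lt_sqrt_sq_add_three a
  have := neg_abs_le a
  unfold gueEndpoint
  linarith

lemma gueEndpoint_le_neg {a : ℝ} (ha : a ≤ 1) : gueEndpoint a ≤ -a := by
  have h : 2 * a ≤ √(a ^ 2 + 3) := by
    rcases le_total a 0 with ha0 | ha0
    · linarith [sqrt_nonneg (a ^ 2 + 3)]
    · calc 2 * a = √((2 * a) ^ 2) := (sqrt_sq (by linarith)).symm
        _ ≤ √(a ^ 2 + 3) := sqrt_le_sqrt (by nlinarith)
  unfold gueEndpoint
  linarith

lemma sub_gueEndpoint_mul_add (a : ℝ) : (a - gueEndpoint a) * (a + 3 * gueEndpoint a) = -4 := by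
  have h : √(a ^ 2 + 3) ^ 2 = a ^ 2 + 3 := sq_sqrt (by positivity)
  unfold gueEndpoint
  linear_combination (-4 / 3) * h

theorem gue_density_probability_general (a : ℝ) (ha1 : a ≤ 1) :
    (∀ x ∈ Ioo ((a - 2 * Real.sqrt (a^2 + 3)) / 3) a,
      0 < (2 / Real.pi) * Real.sqrt ((x - (a - 2 * Real.sqrt (a^2 + 3)) / 3) / (a - x)) *
        ((a - (a - 2 * Real.sqrt (a^2 + 3)) / 3) / 2 - x)) ∧
    ((∫ x in ((a - 2 * Real.sqrt (a^2 + 3)) / 3)..a,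
        (2 / Real.pi) * Real.sqrt ((x - (a - 2 * Real.sqrt (a^2 + 3)) / 3) / (a - x)) *
          ((a - (a - 2 * Real.sqrt (a^2 + 3)) / 3) / 2 - x))
      = 1) ∧
    (∀ x ∈ Ioo (-1:ℝ) 1,
      (2 / Real.pi) * Real.sqrt ((x - (-1)) / (1 - x)) * ((1 - (-1)) / 2 - x)
        = (2 / Real.pi) * Real.sqrt (1 - x^2)) := by
  rw [show (a - 2 * √(a ^ 2 + 3)) / 3 = gueEndpoint a from rfl]
  refine ⟨fun x hx => ?_, ?_, fun x hx => ?_⟩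
  · rw [mul_assoc]
    exact mul_pos (by positivity)
      (sqrt_div_mul_sub_pos hx (by linarith [gueEndpoint_le_neg ha1]))
  · simp_rw [mul_assoc]
    rw [intervalIntegral.integral_const_mul, integral_sqrt_div_mul_sub (gueEndpoint_lt a)]
    have hend := sub_gueEndpoint_mul_add a
    field_simp
    linear_combination (-2) * hend
  · rw [mul_assoc, show (1 - (-1 : ℝ)) / 2 - x = 1 - x by ring,
      sqrt_div_mul_eq_sqrt_mul _ (sub_pos.2 hx.2).le]
    congr 2
    ring

/-- The GUE constrained equilibrium density is a probability density; for a = 1 it reduces to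
the semicircle density. -/
theorem gue_density_probability (a : ℝ) (ha0 : 0 < a) (ha1 : a ≤ 1) :
    (∀ x ∈ Ioo ((a - 2 * Real.sqrt (a^2 + 3)) / 3) a,
      0 < (2 / Real.pi) * Real.sqrt ((x - (a - 2 * Real.sqrt (a^2 + 3)) / 3) / (a - x)) *
        ((a - (a - 2 * Real.sqrt (a^2 + 3)) / 3) / 2 - x)) ∧
    ((∫ x in ((a - 2 * Real.sqrt (a^2 + 3)) / 3)..a,
        (2 / Real.pi) * Real.sqrt ((x - (a - 2 * Real.sqrt (a^2 + 3)) / 3) / (a - x)) *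
          ((a - (a - 2 * Real.sqrt (a^2 + 3)) / 3) / 2 - x))
      = 1) ∧
    (∀ x ∈ Ioo (-1:ℝ) 1,
      (2 / Real.pi) * Real.sqrt ((x - (-1)) / (1 - x)) * ((1 - (-1)) / 2 - x)
        = (2 / Real.pi) * Real.sqrt (1 - x^2)) :=
  gue_density_probability_general a ha1
end
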